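/- Let $\theta_i = i$ and let $X_i$ be independent exponentials with rate $i$. Let $\sigma_n \in S_n$ be the permutation with $X_{\sigma_n(1)} > \cdots > X_{\sigma_n(n)}$. Then $\lim_{n\to\infty} P(\sigma_n(1) = 1) = \int_0^1 \prod_{j=2}^\infty (1 - y^j)\, dy$. -/

import Mathlib

/-!
Ball `0` is drawn last exactly when `X 0` is the largest of `X 0, …, X (n-1)`. Conditioning on
`X 0 = x` and using independence, this has probability
`∫ ∏_{i=1}^{n-1} (1 - e^{-(i+1)x}) dExp(1)(x)`, and `y = e^{-x}` pushes `Exp(1)` forward to the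
uniform law on `(0, 1)`, which turns it into `∫₀¹ ∏_{j=2}^{n} (1 - y^j) dy`. These integrands lie in
`[0, 1]` and converge to the infinite product, so dominated convergence gives the limit.
-/

open MeasureTheory ProbabilityTheory Filter Set Real
open scoped Topology

lemma apply_zero_eq_iff_forall_lt {α : Type*} [LinearOrder α] {n k : ℕ} {σ : ℕ → ℕ} {x : ℕ → α}
    (hk : k < n) (hσ : BijOn σ (Iio n) (Iio n))
    (hsort : ∀ i j, i < j → j < n → x (σ j) < x (σ i)) :
    σ 0 = k ↔ ∀ i ∈ (Finset.range n).erase k, x i < x k := by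
  have hmax : ∀ i < n, x i ≤ x (σ 0) := by
    intro i hi
    obtain ⟨j, hj, rfl⟩ := hσ.surjOn hi
    rcases j.eq_zero_or_pos with rfl | hj0
    · exact le_rfl
    · exact (hsort 0 j hj0 hj).le
  constructor
  · rintro rfl i hi
    obtain ⟨j, hj, rfl⟩ := hσ.surjOn (Finset.mem_range.1 (Finset.mem_of_mem_erase hi))
    have hj0 : j ≠ 0 := by rintro rfl; exact Finset.ne_of_mem_erase hi rfl
    exact hsort 0 j (Nat.pos_of_ne_zero hj0) hj
  · intro hlt
    by_contra hne
    have h0 : σ 0 ∈ (Finset.range n).erase k :=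
      Finset.mem_erase.2 ⟨hne, Finset.mem_range.2 (hσ.mapsTo (show 0 < n by omega))⟩
    exact (hlt _ h0).not_ge (hmax k hk)

lemma ProbabilityTheory.iIndepFun.measure_forall_lt_eq_lintegral {ι Ω : Type*}
    [MeasurableSpace Ω] {P : Measure Ω} [IsFiniteMeasure P] {X : ι → Ω → ℝ}
    (hmeas : ∀ i, Measurable (X i)) (hindep : iIndepFun X P) {k : ι} {T : Finset ι} (hk : k ∉ T) :
    P {ω | ∀ i ∈ T, X i ω < X k ω} = ∫⁻ x, ∏ i ∈ T, P.map (X i) (Iio x) ∂P.map (X k) := by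
  set V : Ω → T → ℝ := fun ω i ↦ X i ω
  have hV : Measurable V := measurable_pi_lambda _ fun i ↦ hmeas i
  have hkV : IndepFun (X k) V P :=
    (hindep.indepFun_finset {k} T (Finset.disjoint_singleton_left.2 hk) hmeas).comp
      (φ := fun u : ({k} : Finset ι) → ℝ ↦ u ⟨k, Finset.mem_singleton_self k⟩) (ψ := id)
      (measurable_pi_apply _) measurable_id
  set E : Set (ℝ × (T → ℝ)) := {p | ∀ i, p.2 i < p.1}
  have hE : MeasurableSet E := by
    simp only [E, ofPred_forall]
    exact .iInter fun i ↦ measurableSet_lt (by fun_prop) (by fun_prop)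
  have hsection (x : ℝ) : P.map V (Prod.mk x ⁻¹' E) = ∏ i ∈ T, P.map (X i) (Iio x) := by
    have hs : MeasurableSet (Prod.mk x ⁻¹' E) := measurable_prodMk_left hE
    have hpre : V ⁻¹' (Prod.mk x ⁻¹' E) = ⋂ i ∈ T, X i ⁻¹' Iio x := by
      ext ω; simp [V, E]
    rw [Measure.map_apply hV hs, hpre, hindep.measure_inter_preimage_eq_mul T
      (fun _ _ ↦ measurableSet_Iio)]
    exact Finset.prod_congr rfl fun i _ ↦ (Measure.map_apply (hmeas i) measurableSet_Iio).symm
  calc P {ω | ∀ i ∈ T, X i ω < X k ω}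
      = P ((fun ω ↦ (X k ω, V ω)) ⁻¹' E) := by congr 1; ext ω; simp [V, E]
    _ = ((P.map (X k)).prod (P.map V)) E := by
      rw [← hkV.map_prod_eq_prod_map_map (hmeas k).aemeasurable hV.aemeasurable,
        Measure.map_apply ((hmeas k).prodMk hV) hE]
    _ = ∫⁻ x, ∏ i ∈ T, P.map (X i) (Iio x) ∂P.map (X k) := by
      simp_rw [Measure.prod_apply hE, hsection]

lemma expMeasure_Iio {r : ℝ} (hr : 0 < r) (x : ℝ) :
    expMeasure r (Iio x) = ENNReal.ofReal (1 - exp (-(r * x))) := by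
  have := isProbabilityMeasure_expMeasure hr
  have hac : expMeasure r ≪ volume := withDensity_absolutelyContinuous _ _
  rw [measure_congr (hac.ae_eq Iio_ae_eq_Iic), ← ofReal_cdf, cdf_expMeasure_eq hr]
  split_ifs with hx
  · rfl
  · rw [eq_comm, ENNReal.ofReal_zero, ENNReal.ofReal_eq_zero]
    exact sub_nonpos.2 (one_le_exp (by nlinarith))

lemma map_exp_neg_expMeasure_one :
    (expMeasure 1).map (fun x ↦ exp (-x)) = volume.restrict (Ioo 0 1) := by
  have := isProbabilityMeasure_expMeasure one_pos
  have hg : Measurable fun x : ℝ ↦ exp (-x) := by fun_prop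
  have : IsProbabilityMeasure ((expMeasure 1).map fun x ↦ exp (-x)) :=
    Measure.isProbabilityMeasure_map hg.aemeasurable
  refine Measure.ext_of_Ici _ _ fun y ↦ ?_
  rw [Measure.map_apply hg measurableSet_Ici, Measure.restrict_apply measurableSet_Ici]
  rcases le_or_gt y 0 with hy | hy
  · have hpre : (fun x : ℝ ↦ exp (-x)) ⁻¹' Ici y = univ :=
      eq_univ_of_forall fun x ↦ hy.trans (exp_pos _).le
    have hinter : Ici y ∩ Ioo 0 1 = Ioo 0 1 := inter_eq_right.2 fun x hx ↦ hy.trans hx.1.le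
    rw [hpre, measure_univ, hinter, Real.volume_Ioo]
    norm_num
  · have hpre : (fun x : ℝ ↦ exp (-x)) ⁻¹' Ici y = Iic (-log y) := by
      ext x
      rw [mem_preimage, mem_Ici, mem_Iic, le_neg, ← log_le_iff_le_exp hy]
    have hinter : Ici y ∩ Ioo 0 1 = Ico y 1 :=
      Set.ext fun x ↦ ⟨fun ⟨h1, _, h3⟩ ↦ ⟨h1, h3⟩, fun ⟨h1, h3⟩ ↦ ⟨h1, hy.trans_le h1, h3⟩⟩
    rw [hpre, hinter, Real.volume_Ico, ← ofReal_cdf, cdf_expMeasure_eq one_pos, one_mul, neg_neg,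
      exp_log hy]
    split_ifs with h
    · rfl
    · rw [ENNReal.ofReal_zero, eq_comm, ENNReal.ofReal_eq_zero, sub_nonpos]
      exact ((log_pos_iff hy.le).1 (by linarith)).le

lemma prod_one_sub_pow_mem_Icc {ι : Type*} {y : ℝ} (hy : y ∈ Icc 0 1) (s : Finset ι)
    (k : ι → ℕ) : ∏ i ∈ s, (1 - y ^ k i) ∈ Icc 0 1 :=
  ⟨Finset.prod_nonneg fun _ _ ↦ sub_nonneg.2 (pow_le_one₀ hy.1 hy.2),
    Finset.prod_le_one (fun _ _ ↦ sub_nonneg.2 (pow_le_one₀ hy.1 hy.2))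
      fun _ _ ↦ sub_le_self _ (pow_nonneg hy.1 _)⟩

lemma lintegral_prod_expMeasure_Iio {ι : Type*} (s : Finset ι) (k : ι → ℕ)
    (hk : ∀ i ∈ s, 0 < k i) :
    ∫⁻ x, ∏ i ∈ s, expMeasure (k i) (Iio x) ∂expMeasure 1
      = ∫⁻ y in Ioo 0 1, ENNReal.ofReal (∏ i ∈ s, (1 - y ^ k i)) := by
  calc ∫⁻ x, ∏ i ∈ s, expMeasure (k i) (Iio x) ∂expMeasure 1
      = ∫⁻ x, (fun y ↦ ∏ i ∈ s, ENNReal.ofReal (1 - y ^ k i)) (exp (-x)) ∂expMeasure 1 := by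
        refine lintegral_congr fun x ↦ Finset.prod_congr rfl fun i hi ↦ ?_
        rw [expMeasure_Iio (Nat.cast_pos.2 (hk i hi)), ← exp_nat_mul, mul_neg]
    _ = ∫⁻ y in Ioo 0 1, ∏ i ∈ s, ENNReal.ofReal (1 - y ^ k i) := by
        rw [← map_exp_neg_expMeasure_one, lintegral_map (by fun_prop) (by fun_prop)]
    _ = ∫⁻ y in Ioo 0 1, ENNReal.ofReal (∏ i ∈ s, (1 - y ^ k i)) :=
        setLIntegral_congr_fun measurableSet_Ioo fun y hy ↦ (ENNReal.ofReal_prod_of_nonneg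
          fun _ _ ↦ sub_nonneg.2 (pow_le_one₀ hy.1.le hy.2.le)).symm

lemma multipliable_one_sub_pow_add {y : ℝ} (hy : |y| < 1) (k : ℕ) :
    Multipliable fun j : ℕ ↦ 1 - y ^ (j + k) := by
  simpa [sub_eq_add_neg, pow_add] using Real.multipliable_one_add_of_summable
    ((summable_geometric_of_abs_lt_one hy).mul_right (y ^ k)).neg

lemma tendsto_setIntegral_prod_one_sub_pow (k : ℕ) :
    Tendsto (fun m ↦ ∫ y in Ioo (0 : ℝ) 1, ∏ j ∈ Finset.range m, (1 - y ^ (j + k))) atTop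
      (𝓝 (∫ y in Ioo (0 : ℝ) 1, ∏' j, (1 - y ^ (j + k)))) := by
  refine tendsto_integral_of_dominated_convergence (fun _ ↦ 1) (fun m ↦ by fun_prop)
    (integrable_const 1) (fun m ↦ ?_) ?_
  all_goals filter_upwards [ae_restrict_mem measurableSet_Ioo] with y hy
  · have h := prod_one_sub_pow_mem_Icc (Ioo_subset_Icc_self hy) (Finset.range m) (· + k)
    rw [Real.norm_of_nonneg h.1]
    exact h.2
  · exact (multipliable_one_sub_pow_add (by rw [abs_lt]; constructor <;> linarith [hy.1, hy.2])
      k).hasProd.tendsto_prod_nat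

/-- for independent exponentials `X i` of rate `i + 1` (Sukhatme
weights, zero-indexed) and `σn n` the permutation listing `X 0, …, X (n-1)` in
decreasing order, the probability that the smallest-rate ball is last, i.e.
`σn n 0 = 0`, converges to `∫₀¹ ∏_{j≥2} (1 - y^j) dy`. -/
theorem sukhatme_last_ball_limit
    {Ω : Type*} [MeasurableSpace Ω] (P : Measure Ω) [IsProbabilityMeasure P]
    (X : ℕ → Ω → ℝ) (hmeas : ∀ i, Measurable (X i))
    (hindep : iIndepFun X P)
    (hlaw : ∀ i : ℕ, Measure.map (X i) P = expMeasure (i + 1))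
    (σn : ℕ → Ω → (ℕ → ℕ))
    (hσ : ∀ n, ∀ᵐ ω ∂P,
      (∀ i, n ≤ i → σn n ω i = i) ∧
      Set.BijOn (σn n ω) (Set.Iio n) (Set.Iio n) ∧
      (∀ i j, i < j → j < n → X (σn n ω j) ω < X (σn n ω i) ω)) :
    Tendsto (fun n : ℕ => (P {ω | σn n ω 0 = 0}).toReal) atTop
      (nhds (∫ y in Set.Ioo (0 : ℝ) 1, ∏' j : ℕ, (1 - y ^ (j + 2)))) := by
  have key (m : ℕ) : P {ω | σn (m + 1) ω 0 = 0}
      = ∫⁻ y in Ioo 0 1, ENNReal.ofReal (∏ j ∈ Finset.range m, (1 - y ^ (j + 2))) :=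
    calc P {ω | σn (m + 1) ω 0 = 0}
        = P {ω | ∀ i ∈ (Finset.range (m + 1)).erase 0, X i ω < X 0 ω} :=
          measure_congr <| (hσ (m + 1)).mono fun ω ⟨_, hbij, hsort⟩ ↦
            propext (apply_zero_eq_iff_forall_lt m.succ_pos hbij hsort)
      _ = ∫⁻ x, ∏ i ∈ (Finset.range (m + 1)).erase 0, P.map (X i) (Iio x) ∂P.map (X 0) :=
          hindep.measure_forall_lt_eq_lintegral hmeas (Finset.notMem_erase 0 _)
      _ = ∫⁻ x, ∏ j ∈ Finset.range m, expMeasure ((j + 2 : ℕ) : ℝ) (Iio x) ∂expMeasure 1 := by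
          have hT : (Finset.range (m + 1)).erase 0 = (Finset.range m).image (· + 1) := by
            ext (_ | i) <;> simp
          simp_rw [hT, Finset.prod_image (add_left_injective 1).injOn, hlaw]
          push_cast
          ring_nf
      _ = _ := lintegral_prod_expMeasure_Iio _ _ fun j _ ↦ by omega
  rw [← tendsto_add_atTop_iff_nat 1]
  refine (tendsto_setIntegral_prod_one_sub_pow 2).congr fun m ↦ ?_
  rw [key, integral_eq_lintegral_of_nonneg_ae ?_ (by fun_prop)]
  filter_upwards [ae_restrict_mem measurableSet_Ioo] with y hy
  exact (prod_one_sub_pow_mem_Icc (Ioo_subset_Icc_self hy) _ _).1
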